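/- If f is a budget-balanced distribution rule for a welfare function W (with W(∅) = 0) on a finite player set N that guarantees the existence of a pure Nash equilibrium in all games in G(N, f, W), then for every S ⊆ N and every i ∈ S ∖ N^W(S), f(i, S) = 0. -/

import Mathlib

/-!
If `i ∈ S` lies in no contributing coalition of `S`, then `W (S ∖ {i}) = W S`, as `W S` is the
sum of the coefficients `coeff W T` over `T ⊆ S` (Möbius inversion). By budget balance the
changes `f(j, S) - f(j, S ∖ {i})` of the other players sum to `-f(i, S)`. If `f(i, S) ≠ 0`, some
`j` changes with the sign opposite to `f(i, S)`, while `f(i, S ∖ {j}) = 0` by induction on `S`.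
This contradicts the game in which `i` and `j` each choose one of two resources and the rest of
`S` occupies both: in its equilibrium `i` and `j` are either together, and then
`f(i, S ∖ {j}) ≤ f(i, S)` and `f(j, S ∖ {i}) ≤ f(j, S)`, or apart, and then both inequalities are
reversed.
-/

open scoped BigOperators Classical

namespace CostSharing

/-- A welfare sharing game on player set `N`: a finite resource set, a nonempty
finite action set (a collection of subsets of resources) for each player, and a
local welfare function at each resource. -/
structure Game (N : Type) [Fintype N] [DecidableEq N] where
  R : Type
  [finR : Fintype R]
  [decR : DecidableEq R]
  act : N → Finset (Finset R)
  act_nonempty : ∀ i, (act i).Nonempty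
  Wr : R → Finset N → ℝ

attribute [instance] Game.finR Game.decR

variable {N : Type} [Fintype N] [DecidableEq N]

/-- `{a}_r`: the set of players choosing resource `r` in profile `a`. -/
def playersAt {G : Game N} (a : N → Finset G.R) (r : G.R) : Finset N :=
  Finset.univ.filter fun i => r ∈ a i

/-- Player `i`'s utility, where `fD` assigns to each local welfare function its
local distribution rule (so resources with identical welfare functions have
identical distribution rules). -/
noncomputable def utility (G : Game N) (fD : (Finset N → ℝ) → N → Finset N → ℝ)
    (a : N → Finset G.R) (i : N) : ℝ :=
  ∑ r ∈ a i, fD (G.Wr r) i (playersAt a r)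

/-- Pure Nash equilibrium. -/
def IsPNE (G : Game N) (fD : (Finset N → ℝ) → N → Finset N → ℝ)
    (a : N → Finset G.R) : Prop :=
  (∀ i, a i ∈ G.act i) ∧
    ∀ i : N, ∀ b ∈ G.act i,
      utility G fD (Function.update a i b) i ≤ utility G fD a i

/-- Every game in the class `G(N, f^𝕎, 𝕎)` possesses a pure Nash equilibrium. -/
def GuaranteesPNE (𝕎 : Set (Finset N → ℝ))
    (fD : (Finset N → ℝ) → N → Finset N → ℝ) : Prop :=
  ∀ G : Game N, (∀ r : G.R, G.Wr r ∈ 𝕎) → ∃ a, IsPNE G fD a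

/-- Every game in the single-welfare-function class `G(N, f, W)` possesses a
pure Nash equilibrium. -/
def GuaranteesPNE1 (W : Finset N → ℝ) (f : N → Finset N → ℝ) : Prop :=
  ∀ G : Game N, (∀ r : G.R, G.Wr r = W) → ∃ a, IsPNE G (fun _ => f) a

/-- A distribution rule allocates nothing to absent players. -/
def DistRule (f : N → Finset N → ℝ) : Prop :=
  ∀ (i : N) (S : Finset N), i ∉ S → f i S = 0

/-- Budget balance: `∑_{i∈S} f(i,S) = W(S)`. -/
def BudgetBalanced (W : Finset N → ℝ) (f : N → Finset N → ℝ) : Prop :=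
  ∀ S : Finset N, ∑ i ∈ S, f i S = W S

/-- The inclusion (unanimity) welfare function `W^T`. -/
def unanimity (T S : Finset N) : ℝ := if T ⊆ S then 1 else 0

/-- The basis coefficient `q^W_T` of `W` on the unanimity basis (Möbius inversion). -/
def coeff (W : Finset N → ℝ) (T : Finset N) : ℝ :=
  ∑ R ∈ T.powerset, (-1 : ℝ) ^ (T.card - R.card) * W R

/-- The support `𝒯^W` of the basis representation of `W`. -/
noncomputable def supp (W : Finset N → ℝ) : Finset (Finset N) :=
  Finset.univ.filter fun T => coeff W T ≠ 0

/-- `𝒯^W(S)`: the contributing coalitions within `S`. -/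
noncomputable def suppIn (W : Finset N → ℝ) (S : Finset N) : Finset (Finset N) :=
  (supp W).filter (· ⊆ S)

/-- `N^W(S)`: the contributing players within `S`. -/
noncomputable def contributors (W : Finset N → ℝ) (S : Finset N) : Finset N :=
  (suppIn W S).biUnion id

/-- A weight system `ω = (λ, Σ)`: strictly positive player weights together with
an ordered partition of `N`. -/
structure WeightSystem (N : Type) [Fintype N] [DecidableEq N] where
  lam : N → ℝ
  lam_pos : ∀ i, 0 < lam i
  m : ℕ
  part : Fin m → Finset N
  part_nonempty : ∀ k, (part k).Nonempty
  part_disjoint : ∀ k l, k ≠ l → Disjoint (part k) (part l)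
  part_covers : ∀ i : N, ∃ k, i ∈ part k

/-- The index of the block of the ordered partition containing player `i`. -/
noncomputable def WeightSystem.idx (ω : WeightSystem N) (i : N) : Fin ω.m :=
  (ω.part_covers i).choose

/-- `T̄ = T ∩ S_k` where `k = min {j : S_j ∩ T ≠ ∅}`. -/
noncomputable def WeightSystem.bar (ω : WeightSystem N) (T : Finset N) : Finset N :=
  T.filter fun i => ∀ j ∈ T, ω.idx i ≤ ω.idx j

/-- The generalized weighted Shapley value basis rule `f^T_{GWSV}[ω]`. -/
noncomputable def fGWSVbasis (ω : WeightSystem N) (T : Finset N) (i : N)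
    (S : Finset N) : ℝ :=
  if i ∈ ω.bar T ∧ T ⊆ S then ω.lam i / ∑ j ∈ ω.bar T, ω.lam j else 0

/-- The generalized weighted marginal contribution basis rule `f^T_{GWMC}[ω]`. -/
noncomputable def fGWMCbasis (ω : WeightSystem N) (T : Finset N) (i : N)
    (S : Finset N) : ℝ :=
  if i ∈ ω.bar T ∧ T ⊆ S then ω.lam i else 0

/-- The generalized weighted Shapley value distribution rule `f^{W'}_{GWSV}[ω]`. -/
noncomputable def fGWSV (ω : WeightSystem N) (W' : Finset N → ℝ) (i : N)
    (S : Finset N) : ℝ :=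
  ∑ T ∈ supp W', coeff W' T * fGWSVbasis ω T i S

/-- The generalized weighted marginal contribution distribution rule
`f^{W''}_{GWMC}[ω]`. -/
noncomputable def fGWMC (ω : WeightSystem N) (W'' : Finset N → ℝ) (i : N)
    (S : Finset N) : ℝ :=
  ∑ T ∈ supp W'', coeff W'' T * fGWMCbasis ω T i S

/-- The recursively defined basis distribution rules `f^T` of a distribution
rule `f` for `W` (recursion along the min-partition of `(𝒯^W, ⊆)`). -/
noncomputable def basisRule (W : Finset N → ℝ) (f : N → Finset N → ℝ)
    (T : Finset N) (i : N) (S : Finset N) : ℝ :=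
  if T ⊆ S then
    (1 / coeff W T) *
      (f i T - ∑ T' ∈ ((suppIn W T).erase T).attach,
        coeff W T'.1 * basisRule W f T'.1 i S)
  else 0
termination_by T.card
decreasing_by
  have h := T'.2
  simp only [Finset.mem_erase, suppIn, Finset.mem_filter] at h
  exact Finset.card_lt_card (Finset.ssubset_iff_subset_ne.mpr ⟨h.2.2, h.1⟩)

end CostSharing

namespace CostSharing

open Finset

section DecidableEq

variable {N : Type} [DecidableEq N]

theorem coeff_insert (W : Finset N → ℝ) {a : N} {T : Finset N} (ha : a ∉ T) :
    coeff W (insert a T) = coeff (fun R => W (insert a R)) T - coeff W T := by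
  simp only [coeff, sum_powerset_insert ha, card_insert_of_notMem ha]
  rw [add_comm, sub_eq_add_neg, ← sum_neg_distrib]
  congr 1
  · refine sum_congr rfl fun R hR => ?_
    rw [card_insert_of_notMem fun h => ha (mem_powerset.mp hR h), Nat.add_sub_add_right]
  · refine sum_congr rfl fun R hR => ?_
    rw [Nat.sub_add_comm (card_le_card (mem_powerset.mp hR)), pow_succ]
    ring

theorem sum_powerset_coeff (W : Finset N → ℝ) (S : Finset N) :
    ∑ T ∈ S.powerset, coeff W T = W S := by
  induction S using Finset.induction_on generalizing W with
  | empty => simp [coeff]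
  | insert a S ha ih =>
    rw [sum_powerset_insert ha, ← ih fun R => W (insert a R), ← sum_add_distrib]
    refine sum_congr rfl fun T hT => ?_
    rw [coeff_insert W fun h => ha (mem_powerset.mp hT h)]
    ring

theorem BudgetBalanced.sum_erase_sub_eq_neg {W : Finset N → ℝ} {f : N → Finset N → ℝ}
    (hbb : BudgetBalanced W f) {S : Finset N} {i : N} (hi : i ∈ S)
    (hW : W (S.erase i) = W S) :
    ∑ j ∈ S.erase i, (f j S - f j (S.erase i)) = -f i S := by
  have hS := hbb S
  rw [← add_sum_erase S _ hi] at hS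
  rw [sum_sub_distrib, hbb (S.erase i), hW]
  linarith

def twoProfile (S : Finset N) (i j : N) (x y : Bool) : N → Finset Bool := fun k =>
  if k = i then {x} else if k = j then {y} else if k ∈ S then univ else ∅

section TwoProfile

variable {S : Finset N} {i j : N}

theorem twoProfile_left (x y : Bool) : twoProfile S i j x y i = {x} := if_pos rfl

theorem twoProfile_right (hij : i ≠ j) (x y : Bool) : twoProfile S i j x y j = {y} := by
  simp [twoProfile, hij.symm]

theorem twoProfile_of_ne {k : N} (hki : k ≠ i) (hkj : k ≠ j) (x y x' y' : Bool) :
    twoProfile S i j x y k = twoProfile S i j x' y' k := by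
  simp [twoProfile, hki, hkj]

theorem update_twoProfile_left (x y x' : Bool) :
    Function.update (twoProfile S i j x y) i {x'} = twoProfile S i j x' y := by
  ext1 k
  by_cases hki : k = i
  · subst hki; simp [twoProfile_left]
  · simp [twoProfile, hki]

theorem update_twoProfile_right (hij : i ≠ j) (x y y' : Bool) :
    Function.update (twoProfile S i j x y) j {y'} = twoProfile S i j x y' := by
  ext1 k
  by_cases hkj : k = j
  · subst hkj; simp [twoProfile_right hij]
  · simp [twoProfile, hkj]

end TwoProfile

end DecidableEq

theorem exists_mul_neg_of_sum_eq_neg {ι R : Type*} [CommRing R] [LinearOrder R]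
    [IsStrictOrderedRing R] {s : Finset ι} {d : ι → R} {x : R} (hx : x ≠ 0)
    (h : ∑ j ∈ s, d j = -x) : ∃ j ∈ s, x * d j < 0 := by
  by_contra! hs
  have := sum_nonneg hs
  rw [← mul_sum, h] at this
  nlinarith [mul_self_pos.mpr hx]

section Fintype

variable {N : Type} [Fintype N] [DecidableEq N]

theorem mem_contributors {W : Finset N → ℝ} {S : Finset N} {k : N} :
    k ∈ contributors W S ↔ ∃ T, coeff W T ≠ 0 ∧ T ⊆ S ∧ k ∈ T := by
  simp [contributors, suppIn, supp, and_assoc]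

theorem contributors_mono (W : Finset N → ℝ) {S S' : Finset N} (h : S' ⊆ S) :
    contributors W S' ⊆ contributors W S := by
  intro k hk
  obtain ⟨T, hT, hTS', hkT⟩ := mem_contributors.mp hk
  exact mem_contributors.mpr ⟨T, hT, hTS'.trans h, hkT⟩

theorem apply_erase_of_notMem_contributors {W : Finset N → ℝ} {S : Finset N} {i : N}
    (hi : i ∉ contributors W S) : W (S.erase i) = W S := by
  by_cases hiS : i ∈ S
  · have hsplit : ∑ T ∈ S.powerset, coeff W T = ∑ T ∈ (S.erase i).powerset, coeff W T +
        ∑ T ∈ (S.erase i).powerset, coeff W (insert i T) := by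
      rw [← sum_powerset_insert (notMem_erase i S), insert_erase hiS]
    have hzero : ∀ T ∈ (S.erase i).powerset, coeff W (insert i T) = 0 := fun T hT => by
      by_contra hT0
      exact hi (mem_contributors.mpr ⟨insert i T, hT0,
        insert_subset hiS ((mem_powerset.mp hT).trans (erase_subset i S)), mem_insert_self i T⟩)
    rw [← sum_powerset_coeff W S, ← sum_powerset_coeff W (S.erase i), hsplit,
      sum_eq_zero hzero, add_zero]
  · rw [erase_eq_of_notMem hiS]

theorem utility_of_eq_singleton {G : Game N} {fD : (Finset N → ℝ) → N → Finset N → ℝ}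
    {a : N → Finset G.R} {k : N} {r : G.R} (h : a k = {r}) :
    utility G fD a k = fD (G.Wr r) k (playersAt a r) := by
  rw [utility, h, sum_singleton]

/-- The actions of `k` are the `k`-components of the profiles `twoProfile S i j x x`: a choice
between `{true}` and `{false}` for `i` and `j`, a single fixed action for everyone else. -/
abbrev twoGame (W : Finset N → ℝ) (S : Finset N) (i j : N) : Game N where
  R := Bool
  act k := univ.image fun x => twoProfile S i j x x k
  act_nonempty _ := univ_nonempty.image _
  Wr _ := W

section TwoGame

variable {W : Finset N → ℝ} {S : Finset N} {i j : N}

theorem eq_twoProfile_of_mem_act (hij : i ≠ j) {a : N → Finset Bool}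
    (ha : ∀ k, a k ∈ (twoGame W S i j).act k) : ∃ x y, a = twoProfile S i j x y := by
  choose c hc using fun k => mem_image.mp (ha k)
  refine ⟨c i, c j, funext fun k => ?_⟩
  rw [← (hc k).2]
  by_cases hki : k = i
  · subst hki; rw [twoProfile_left, twoProfile_left]
  by_cases hkj : k = j
  · subst hkj; rw [twoProfile_right hij, twoProfile_right hij]
  exact twoProfile_of_ne hki hkj _ _ _ _

theorem mem_playersAt_twoProfile {k : N} (x y r : Bool) :
    k ∈ playersAt (G := twoGame W S i j) (twoProfile S i j x y) r ↔
      if k = i then r = x else if k = j then r = y else k ∈ S := by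
  rw [playersAt, mem_filter]
  simp only [twoProfile]
  split_ifs <;> simp_all

theorem playersAt_twoProfile_left (hi : i ∈ S) (hj : j ∈ S) (hij : i ≠ j) (x y : Bool) :
    playersAt (G := twoGame W S i j) (twoProfile S i j x y) x =
      if x = y then S else S.erase j := by
  ext k
  rw [mem_playersAt_twoProfile]
  by_cases hki : k = i
  · subst hki; split_ifs <;> simp_all
  by_cases hkj : k = j
  · subst hkj; split_ifs <;> simp_all [eq_comm]
  · split_ifs <;> simp_all

theorem playersAt_twoProfile_right (hi : i ∈ S) (hj : j ∈ S) (hij : i ≠ j) (x y : Bool) :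
    playersAt (G := twoGame W S i j) (twoProfile S i j x y) y =
      if x = y then S else S.erase i := by
  ext k
  rw [mem_playersAt_twoProfile]
  by_cases hki : k = i
  · subst hki; split_ifs <;> simp_all [eq_comm]
  by_cases hkj : k = j
  · subst hkj; split_ifs <;> simp_all
  · split_ifs <;> simp_all

theorem GuaranteesPNE1.twoGame_dichotomy {f : N → Finset N → ℝ} (hPNE : GuaranteesPNE1 W f)
    (hi : i ∈ S) (hj : j ∈ S) (hij : i ≠ j) :
    (f i (S.erase j) ≤ f i S ∧ f j (S.erase i) ≤ f j S) ∨
      (f i S ≤ f i (S.erase j) ∧ f j S ≤ f j (S.erase i)) := by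
  obtain ⟨a, hact, hstable⟩ := hPNE (twoGame W S i j) fun _ => rfl
  obtain ⟨x, y, rfl⟩ := eq_twoProfile_of_mem_act hij hact
  have hdev_i := hstable i {!x} (mem_image.mpr ⟨!x, mem_univ _, twoProfile_left _ _⟩)
  have hdev_j := hstable j {!y} (mem_image.mpr ⟨!y, mem_univ _, twoProfile_right hij _ _⟩)
  rw [update_twoProfile_left, utility_of_eq_singleton (twoProfile_left _ _),
    utility_of_eq_singleton (twoProfile_left _ _), playersAt_twoProfile_left hi hj hij,
    playersAt_twoProfile_left hi hj hij] at hdev_i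
  rw [update_twoProfile_right hij, utility_of_eq_singleton (twoProfile_right hij _ _),
    utility_of_eq_singleton (twoProfile_right hij _ _), playersAt_twoProfile_right hi hj hij,
    playersAt_twoProfile_right hi hj hij] at hdev_j
  cases x <;> cases y <;> simp_all

end TwoGame

end Fintype

theorem zero_on_noncontributing_players_general (N : Type) [Fintype N] [DecidableEq N]
    (W : Finset N → ℝ) (f : N → Finset N → ℝ)
    (hbb : BudgetBalanced W f)
    (hPNE : GuaranteesPNE1 W f) :
    ∀ S : Finset N, ∀ i ∈ S \ contributors W S, f i S = 0 := by
  intro S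
  induction S using Finset.strongInduction with
  | H S ih =>
  intro i hi
  obtain ⟨hiS, hic⟩ := mem_sdiff.mp hi
  by_contra hfi
  obtain ⟨j, hj, hsign⟩ := exists_mul_neg_of_sum_eq_neg hfi
    (hbb.sum_erase_sub_eq_neg hiS (apply_erase_of_notMem_contributors hic))
  obtain ⟨hji, hjS⟩ := mem_erase.mp hj
  have hfi_erase : f i (S.erase j) = 0 := ih _ (erase_ssubset hjS) i <| mem_sdiff.mpr
    ⟨mem_erase.mpr ⟨hji.symm, hiS⟩, fun h => hic (contributors_mono W (erase_subset j S) h)⟩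
  rcases hPNE.twoGame_dichotomy hiS hjS hji.symm with ⟨h_i, h_j⟩ | ⟨h_i, h_j⟩ <;>
    rw [hfi_erase] at h_i <;> nlinarith

/-- **Lemma 2.** A budget-balanced distribution rule `f` for `W` that guarantees
a pure Nash equilibrium in all games in `G(N, f, W)` allocates nothing to
noncontributing players: `f(i,S) = 0` for `i ∈ S ∖ N^W(S)`. -/
theorem zero_on_noncontributing_players (N : Type) [Fintype N] [DecidableEq N]
    (hN : 1 < Fintype.card N)
    (W : Finset N → ℝ) (f : N → Finset N → ℝ)
    (hW0 : W ∅ = 0) (hdist : DistRule f) (hbb : BudgetBalanced W f)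
    (hPNE : GuaranteesPNE1 W f) :
    ∀ S : Finset N, ∀ i ∈ S \ contributors W S, f i S = 0 :=
  zero_on_noncontributing_players_general N W f hbb hPNE

end CostSharing
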